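/- Let U ~ Uniform(0,1), ε uniform on {−1,+1}, and W a real random variable with E|W|^α < ∞, all three independent, where 0 < α < 2. Then λ^α P(|ε U^{−1/α} W| > λ) → E|W|^α as λ → ∞. -/

import Mathlib

/-!
For `λ > 0` and `|ε| = 1`, the event `|ε U^{-1/α} W| > λ` is the event `U < |W|^α / λ^α`.
Since `U` is uniform on `(0,1)` and independent of `W`, conditioning on `W` gives
`λ^α P(|ε U^{-1/α} W| > λ) = E[min(λ^α, |W|^α)]`, which increases to `E|W|^α` by dominated
convergence.
-/

open MeasureTheory ProbabilityTheory Real Filter Set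
open scoped ENNReal Topology

lemma ae_abs_eq_one_smul_dirac_add_smul_dirac (a b : ℝ≥0∞) :
    ∀ᵐ x ∂(a • Measure.dirac (-1 : ℝ) + b • Measure.dirac (1 : ℝ)), |x| = 1 := by
  have hmeas : MeasurableSet {x : ℝ | |x| = 1} := measurableSet_eq_fun (by fun_prop) (by fun_prop)
  rw [ae_add_measure_iff]
  exact ⟨Measure.ae_smul_measure ((ae_dirac_iff hmeas).2 (by simp)) a,
    Measure.ae_smul_measure ((ae_dirac_iff hmeas).2 (by simp)) b⟩

lemma lt_abs_mul_rpow_neg_inv_mul_iff {α lam e u w : ℝ} (hα : 0 < α) (hlam : 0 < lam)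
    (he : |e| = 1) (hu : 0 < u) :
    lam < |e * u ^ (-(1 / α)) * w| ↔ u < |w| ^ α / lam ^ α := by
  have habs : |e * u ^ (-(1 / α)) * w| = u ^ (-(1 / α)) * |w| := by
    rw [abs_mul, abs_mul, he, one_mul, abs_of_pos (rpow_pos_of_pos hu _)]
  have hpow : (u ^ (-(1 / α)) * |w|) ^ α = |w| ^ α / u := by
    rw [mul_rpow (by positivity) (abs_nonneg _), ← rpow_mul hu.le,
      show -(1 / α) * α = -1 by field_simp, rpow_neg_one, inv_mul_eq_div]
  rw [habs, ← rpow_lt_rpow_iff hlam.le (by positivity) hα, hpow,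
    lt_div_iff₀ hu, lt_div_iff₀ (rpow_pos_of_pos hlam α), mul_comm]

lemma measure_lt_eq_lintegral_min_of_uniform {Ω : Type*} [MeasurableSpace Ω] {μ : Measure Ω}
    [IsFiniteMeasure μ] {U Y : Ω → ℝ} (hU : Measurable U) (hY : Measurable Y)
    (hUlaw : μ.map U = volume.restrict (Ioo 0 1)) (hYU : IndepFun Y U μ) :
    μ {ω | U ω < Y ω} = ∫⁻ ω, ENNReal.ofReal (min 1 (Y ω)) ∂μ := by
  have hS : MeasurableSet {p : ℝ × ℝ | p.2 < p.1} := measurableSet_lt (by fun_prop) (by fun_prop)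
  have hsection (y : ℝ) : μ.map U (Prod.mk y ⁻¹' {p : ℝ × ℝ | p.2 < p.1})
      = ENNReal.ofReal (min 1 y) := by
    have hinter : Iio y ∩ Ioo (0 : ℝ) 1 = Ioo 0 (min 1 y) := by
      ext u
      simp only [mem_inter_iff, mem_Iio, mem_Ioo, lt_min_iff]
      tauto
    rw [hUlaw, show Prod.mk y ⁻¹' {p : ℝ × ℝ | p.2 < p.1} = Iio y from rfl,
      Measure.restrict_apply measurableSet_Iio, hinter, volume_Ioo, sub_zero]
  calc μ {ω | U ω < Y ω}
      = μ.map (fun ω => (Y ω, U ω)) {p : ℝ × ℝ | p.2 < p.1} :=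
        (Measure.map_apply (hY.prodMk hU) hS).symm
    _ = ((μ.map Y).prod (μ.map U)) {p : ℝ × ℝ | p.2 < p.1} := by
        rw [(indepFun_iff_map_prod_eq_prod_map_map hY.aemeasurable hU.aemeasurable).1 hYU]
    _ = ∫⁻ ω, ENNReal.ofReal (min 1 (Y ω)) ∂μ := by
        simp_rw [Measure.prod_apply hS, hsection]
        exact lintegral_map (by fun_prop) hY

lemma tendsto_integral_min_atTop {Ω : Type*} [MeasurableSpace Ω] {μ : Measure Ω} {Y : Ω → ℝ}
    (hY : Integrable Y μ) :
    Tendsto (fun t => ∫ ω, min t (Y ω) ∂μ) atTop (𝓝 (∫ ω, Y ω ∂μ)) := by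
  refine tendsto_integral_filter_of_dominated_convergence (fun ω => |Y ω|)
    (Eventually.of_forall fun t => aestronglyMeasurable_const.inf hY.1) ?_ hY.abs
    (ae_of_all _ fun ω => tendsto_const_nhds.congr' ?_)
  · filter_upwards [eventually_ge_atTop 0] with t ht
    refine ae_of_all _ fun ω => ?_
    rw [norm_eq_abs]
    rcases le_total t (Y ω) with h | h
    · rw [min_eq_left h, abs_of_nonneg ht, abs_of_nonneg (ht.trans h)]
      exact h
    · rw [min_eq_right h]
  · filter_upwards [eventually_ge_atTop (Y ω)] with t ht
    exact (min_eq_right ht).symm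

lemma rpow_mul_measure_tail_eq_integral_min {Ω : Type*} [MeasurableSpace Ω] {μ : Measure Ω}
    [IsFiniteMeasure μ] {α lam : ℝ} (hα : 0 < α) (hlam : 0 < lam) {ε U W : Ω → ℝ}
    (hU : Measurable U) (hW : Measurable W) (hε : ∀ᵐ ω ∂μ, |ε ω| = 1)
    (hUlaw : μ.map U = volume.restrict (Ioo 0 1)) (hWU : IndepFun W U μ) :
    lam ^ α * (μ {ω | |ε ω * U ω ^ (-(1 / α)) * W ω| > lam}).toReal
      = ∫ ω, min (lam ^ α) (|W ω| ^ α) ∂μ := by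
  have hlamα : 0 < lam ^ α := rpow_pos_of_pos hlam α
  have hUae : ∀ᵐ ω ∂μ, U ω ∈ Ioo (0 : ℝ) 1 :=
    ae_of_ae_map hU.aemeasurable (hUlaw ▸ ae_restrict_mem measurableSet_Ioo)
  have hevent : {ω | |ε ω * U ω ^ (-(1 / α)) * W ω| > lam}
      =ᵐ[μ] {ω | U ω < |W ω| ^ α / lam ^ α} := by
    refine eventuallyEq_set.2 ?_
    filter_upwards [hε, hUae] with ω he hu
    exact lt_abs_mul_rpow_neg_inv_mul_iff hα hlam he hu.1
  have hYU : IndepFun (fun ω => |W ω| ^ α / lam ^ α) U μ :=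
    hWU.comp (φ := fun w => |w| ^ α / lam ^ α) (by fun_prop) measurable_id
  have hnonneg : 0 ≤ᵐ[μ] fun ω => min 1 (|W ω| ^ α / lam ^ α) :=
    ae_of_all _ fun ω => le_min zero_le_one (by positivity)
  rw [measure_congr hevent, measure_lt_eq_lintegral_min_of_uniform hU (by fun_prop) hUlaw hYU,
    ← integral_eq_lintegral_of_nonneg_ae hnonneg (by fun_prop : Measurable _).aestronglyMeasurable,
    ← integral_const_mul]
  congr 1 with ω
  rw [mul_min_of_nonneg _ _ hlamα.le, mul_one, mul_div_cancel₀ _ hlamα.ne']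

theorem stmt10_general {Ω : Type*} [MeasureSpace Ω] [IsProbabilityMeasure (ℙ : Measure Ω)]
    (α : ℝ) (hα : 0 < α)
    (ε U W : Ω → ℝ) (hε : Measurable ε) (hU : Measurable U) (hW : Measurable W)
    (hεlaw : Measure.map ε ℙ
      = (1/2 : ℝ≥0∞) • Measure.dirac (-1 : ℝ) + (1/2 : ℝ≥0∞) • Measure.dirac (1 : ℝ))
    (hUlaw : Measure.map U ℙ = volume.restrict (Set.Ioo (0:ℝ) 1))
    (hindep : iIndepFun ![ε, U, W] ℙ)
    (hmom : Integrable (fun ω => |W ω| ^ α) ℙ) :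
    Tendsto
      (fun lam : ℝ =>
        lam ^ α * (ℙ {ω | |ε ω * U ω ^ (-(1/α)) * W ω| > lam}).toReal)
      atTop (nhds (∫ ω, |W ω| ^ α ∂ℙ)) := by
  have hεae : ∀ᵐ ω ∂ℙ, |ε ω| = 1 :=
    ae_of_ae_map hε.aemeasurable (hεlaw ▸ ae_abs_eq_one_smul_dirac_add_smul_dirac _ _)
  have hWU : IndepFun W U ℙ := by
    simpa using hindep.indepFun (show (2 : Fin 3) ≠ 1 by decide)
  refine ((tendsto_integral_min_atTop hmom).comp (tendsto_rpow_atTop hα)).congr' ?_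
  filter_upwards [eventually_gt_atTop 0] with lam hlam
  exact (rpow_mul_measure_tail_eq_integral_min hα hlam hU hW hεae hUlaw hWU).symm

/-- For `U ∼ Uniform(0,1)`, `ε` uniform on `{−1,+1}`, `W` with `E|W|^α < ∞`, all
independent (`0 < α < 2`): `λ^α P(|ε U^{−1/α} W| > λ) → E|W|^α` as `λ → ∞`. -/
theorem stmt10 {Ω : Type*} [MeasureSpace Ω] [IsProbabilityMeasure (ℙ : Measure Ω)]
    (α : ℝ) (hα : 0 < α) (hα2 : α < 2)
    (ε U W : Ω → ℝ) (hε : Measurable ε) (hU : Measurable U) (hW : Measurable W)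
    (hεlaw : Measure.map ε ℙ
      = (1/2 : ℝ≥0∞) • Measure.dirac (-1 : ℝ) + (1/2 : ℝ≥0∞) • Measure.dirac (1 : ℝ))
    (hUlaw : Measure.map U ℙ = volume.restrict (Set.Ioo (0:ℝ) 1))
    (hindep : iIndepFun ![ε, U, W] ℙ)
    (hmom : Integrable (fun ω => |W ω| ^ α) ℙ) :
    Tendsto
      (fun lam : ℝ =>
        lam ^ α * (ℙ {ω | |ε ω * U ω ^ (-(1/α)) * W ω| > lam}).toReal)
      atTop (nhds (∫ ω, |W ω| ^ α ∂ℙ)) :=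
  stmt10_general α hα ε U W hε hU hW hεlaw hUlaw hindep hmom
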